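/- arXiv:2103.04898 — 3 statements merged into one kernel-verified Lean document; each statement's English description precedes it below -/
import Mathlib

section
/- If asset j is dominant, then for every rebalancing period n ≥ 1 the all-in weight e_j (the j-th standard basis vector of ℝ^m) is log-optimal: for every K ∈ 𝒦 one has g_n(K) ≤ g_n(e_j), and moreover g_n(e_j) = E[log(1 + X_j(0))]; in particular g_n* = g_1* = E[log(1 + X_j(0))] for all n ≥ 1. -/
open MeasureTheory ProbabilityTheory Filter Finset Real

/-- Compound (total) return of asset `i` over the first `n` periods:
`R_{n,i}(ω) = ∏_{k=0}^{n-1} (1 + X_i(k)(ω))`. -/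
noncomputable def compoundReturn {Ω : Type*} {m : ℕ} (X : ℕ → Ω → Fin m → ℝ)
    (n : ℕ) (ω : Ω) (i : Fin m) : ℝ :=
  ∏ k ∈ Finset.range n, (1 + X k ω i)

/-- Expected logarithmic growth with rebalancing period `n`:
`g_n(K) = (1/n) E[log (Kᵀ R_n)]`. -/
noncomputable def elg {Ω : Type*} [MeasureSpace Ω] {m : ℕ} (X : ℕ → Ω → Fin m → ℝ)
    (n : ℕ) (K : Fin m → ℝ) : ℝ :=
  (n : ℝ)⁻¹ * ∫ ω, Real.log (∑ i, K i * compoundReturn X n ω i)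

/-- The admissible set: the unit simplex in `ℝ^m`. -/
def simplex (m : ℕ) : Set (Fin m → ℝ) := {K | (∀ i, 0 ≤ K i) ∧ ∑ i, K i = 1}

/-!
For a portfolio `K` in the simplex and positive returns `r`,
`log (Kᵀ r) - log r_j = log (∑ K_i r_i / r_j) ≤ ∑ K_i r_i / r_j - 1`.
Applied to `r = R_n`, independence and identical distribution give
`E[R_{n,i} / R_{n,j}] = E[(1 + X_i(0)) / (1 + X_j(0))] ^ n ≤ 1`, so taking expectations
`E[log (Kᵀ R_n)] ≤ E[log R_{n,j}] = n E[log (1 + X_j(0))]`.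
The bounds on the returns keep every logarithm and ratio bounded, hence integrable.
-/

section Simplex

variable {m : ℕ} {K : Fin m → ℝ}

lemma single_mem_simplex (j : Fin m) : Pi.single j 1 ∈ simplex m :=
  single_mem_stdSimplex ℝ j

lemma sum_mul_mem_of_mem_simplex (hK : K ∈ simplex m) {s : Set ℝ} (hs : Convex ℝ s)
    {r : Fin m → ℝ} (hr : ∀ i, r i ∈ s) : ∑ i, K i * r i ∈ s :=
  hs.sum_mem (fun i _ ↦ hK.1 i) hK.2 fun i _ ↦ hr i

lemma log_sum_mul_le (hK : K ∈ simplex m) {r : Fin m → ℝ} (hr : ∀ i, 0 < r i) (j : Fin m) :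
    log (∑ i, K i * r i) ≤ log (r j) + ∑ i, K i * (r i / r j) - 1 := by
  have hS : 0 < ∑ i, K i * r i := sum_mul_mem_of_mem_simplex hK (convex_Ioi 0) hr
  have hratio : ∑ i, K i * (r i / r j) = (∑ i, K i * r i) / r j := by
    simp only [sum_div, mul_div_assoc]
  have hlog := log_le_sub_one_of_pos (div_pos hS (hr j))
  rw [log_div hS.ne' (hr j).ne'] at hlog
  linarith

end Simplex

section Integral

variable {Ω : Type*} [MeasurableSpace Ω] {μ : Measure Ω}

lemma integrable_log_of_ae_mem_Icc [IsFiniteMeasure μ] {f : Ω → ℝ} (hf : AEMeasurable f μ)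
    {a b : ℝ} (ha : 0 < a) (hab : ∀ᵐ ω ∂μ, f ω ∈ Set.Icc a b) :
    Integrable (fun ω ↦ log (f ω)) μ :=
  .of_mem_Icc (log a) (log b) (measurable_log.comp_aemeasurable hf) <| hab.mono fun _ h ↦
    ⟨log_le_log ha h.1, log_le_log (ha.trans_le h.1) h.2⟩

lemma integral_prod_range_of_iIndepFun {Z : ℕ → Ω → ℝ} (hindep : iIndepFun Z μ)
    (hident : ∀ k, IdentDistrib (Z k) (Z 0) μ μ) (n : ℕ) :
    ∫ ω, ∏ k ∈ range n, Z k ω ∂μ = (∫ ω, Z 0 ω ∂μ) ^ n := by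
  simp_rw [← Fin.prod_univ_eq_prod_range fun k ↦ Z k _]
  rw [(hindep.precomp Fin.val_injective).integral_fun_prod_eq_prod_integral
    fun k ↦ (hident k).aemeasurable_fst.aestronglyMeasurable]
  simp [fun k ↦ (hident k).integral_eq]

lemma integral_log_prod_range {Z : ℕ → Ω → ℝ} (hne : ∀ k, ∀ᵐ ω ∂μ, Z k ω ≠ 0)
    (hint : Integrable (fun ω ↦ log (Z 0 ω)) μ) (hident : ∀ k, IdentDistrib (Z k) (Z 0) μ μ)
    (n : ℕ) : ∫ ω, log (∏ k ∈ range n, Z k ω) ∂μ = n * ∫ ω, log (Z 0 ω) ∂μ := by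
  have hlog k : IdentDistrib (fun ω ↦ log (Z k ω)) (fun ω ↦ log (Z 0 ω)) μ μ :=
    (hident k).comp measurable_log
  rw [integral_congr_ae ((ae_all_iff.2 hne).mono fun ω h ↦ log_prod fun k _ ↦ h k),
    integral_finsetSum _ fun k _ ↦ (hlog k).integrable_iff.2 hint]
  simp [fun k ↦ (hlog k).integral_eq]

variable [IsProbabilityMeasure μ] {m : ℕ}

theorem integral_log_sum_mul_le {R : Ω → Fin m → ℝ} (hR : ∀ i, AEMeasurable (fun ω ↦ R ω i) μ)
    {a b : ℝ} (ha : 0 < a) (hRab : ∀ᵐ ω ∂μ, ∀ i, R ω i ∈ Set.Icc a b) {j : Fin m}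
    (hdom : ∀ i, i ≠ j → ∫ ω, R ω i / R ω j ∂μ ≤ 1) {K : Fin m → ℝ} (hK : K ∈ simplex m) :
    ∫ ω, log (∑ i, K i * R ω i) ∂μ ≤ ∫ ω, log (R ω j) ∂μ := by
  have hpos : ∀ᵐ ω ∂μ, ∀ i, 0 < R ω i := hRab.mono fun ω h i ↦ ha.trans_le (h i).1
  have hlogS : Integrable (fun ω ↦ log (∑ i, K i * R ω i)) μ :=
    integrable_log_of_ae_mem_Icc (by fun_prop) ha <|
      hRab.mono fun ω h ↦ sum_mul_mem_of_mem_simplex hK (convex_Icc a b) h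
  have hlogR : Integrable (fun ω ↦ log (R ω j)) μ :=
    integrable_log_of_ae_mem_Icc (hR j) ha (hRab.mono fun ω h ↦ h j)
  have hratio i : Integrable (fun ω ↦ R ω i / R ω j) μ :=
    .of_mem_Icc 0 (b / a) ((hR i).div (hR j)) <| hRab.mono fun ω h ↦
      ⟨div_nonneg (ha.le.trans (h i).1) (ha.le.trans (h j).1),
        div_le_div₀ (ha.le.trans ((h i).1.trans (h i).2)) (h i).2 ha (h j).1⟩
  have hsum : Integrable (fun ω ↦ ∑ i, K i * (R ω i / R ω j)) μ :=
    integrable_finsetSum _ fun i _ ↦ (hratio i).const_mul (K i)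
  have hratio_le i : ∫ ω, R ω i / R ω j ∂μ ≤ 1 := by
    rcases eq_or_ne i j with rfl | hij
    · rw [integral_congr_ae (hpos.mono fun ω h ↦ div_self (h i).ne')]
      simp
    · exact hdom i hij
  calc ∫ ω, log (∑ i, K i * R ω i) ∂μ
      ≤ ∫ ω, (log (R ω j) + ∑ i, K i * (R ω i / R ω j) - 1) ∂μ :=
        integral_mono_ae hlogS ((hlogR.fun_add hsum).sub (integrable_const 1))
          (hpos.mono fun ω h ↦ log_sum_mul_le hK h j)
    _ = ∫ ω, log (R ω j) ∂μ + ∑ i, K i * ∫ ω, R ω i / R ω j ∂μ - 1 := by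
        rw [integral_sub (hlogR.fun_add hsum) (integrable_const 1), integral_add hlogR hsum,
          integral_finsetSum _ fun i _ ↦ (hratio i).const_mul (K i)]
        simp [integral_const_mul]
    _ ≤ ∫ ω, log (R ω j) ∂μ + ∑ i, K i - 1 := by
        gcongr with i
        exact mul_le_of_le_one_right (hK.1 i) (hratio_le i)
    _ = ∫ ω, log (R ω j) ∂μ := by rw [hK.2]; ring

end Integral

section CompoundReturn

variable {Ω : Type*} {m : ℕ} {X : ℕ → Ω → Fin m → ℝ}

lemma compoundReturn_mem_Icc {ω : Ω} {a b : ℝ} (ha : 0 ≤ a)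
    (hX : ∀ k i, 1 + X k ω i ∈ Set.Icc a b) (n : ℕ) (i : Fin m) :
    compoundReturn X n ω i ∈ Set.Icc (a ^ n) (b ^ n) := by
  constructor
  · simpa [compoundReturn] using
      prod_le_prod (s := range n) (fun _ _ ↦ ha) fun k _ ↦ (hX k i).1
  · simpa [compoundReturn] using
      prod_le_prod (s := range n) (fun k _ ↦ ha.trans (hX k i).1) fun k _ ↦ (hX k i).2

variable [MeasurableSpace Ω] {μ : Measure Ω}

lemma exists_ae_one_add_mem_Icc {Xmin Xmax : Fin m → ℝ} (hXmin : ∀ i, -1 < Xmin i)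
    (hbdd : ∀ k, ∀ᵐ ω ∂μ, ∀ i, Xmin i ≤ X k ω i ∧ X k ω i ≤ Xmax i) :
    ∃ δ > 0, ∃ Δ, ∀ᵐ ω ∂μ, ∀ k i, 1 + X k ω i ∈ Set.Icc δ Δ := by
  obtain ⟨⟨δ, hδ⟩, hδXmin⟩ :=
    Finite.exists_ge fun i ↦ (⟨1 + Xmin i, neg_lt_iff_pos_add'.1 (hXmin i)⟩ : Set.Ioi (0 : ℝ))
  obtain ⟨Δ, hXmaxΔ⟩ := Finite.exists_le (1 + Xmax ·)
  refine ⟨δ, hδ, Δ, ?_⟩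
  filter_upwards [ae_all_iff.2 hbdd] with ω h k i
  exact ⟨by linarith [Subtype.coe_le_coe.2 (hδXmin i), (h k i).1],
    by linarith [hXmaxΔ i, (h k i).2]⟩

lemma aemeasurable_compoundReturn (hX : ∀ k, AEMeasurable (X k) μ) (n : ℕ) (i : Fin m) :
    AEMeasurable (fun ω ↦ compoundReturn X n ω i) μ := by
  unfold compoundReturn
  fun_prop

lemma integral_compoundReturn_div (hiid : iIndepFun X μ)
    (hident : ∀ k, IdentDistrib (X k) (X 0) μ μ) (n : ℕ) (i j : Fin m) :
    ∫ ω, compoundReturn X n ω i / compoundReturn X n ω j ∂μ =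
      (∫ ω, (1 + X 0 ω i) / (1 + X 0 ω j) ∂μ) ^ n := by
  have hφ : Measurable fun v : Fin m → ℝ ↦ (1 + v i) / (1 + v j) := by fun_prop
  have hindep : iIndepFun (fun k ω ↦ (1 + X k ω i) / (1 + X k ω j)) μ :=
    hiid.comp _ fun _ ↦ hφ
  simp_rw [compoundReturn, ← prod_div_distrib]
  exact integral_prod_range_of_iIndepFun hindep (fun k ↦ (hident k).comp hφ) n

end CompoundReturn

lemma elg_single {Ω : Type*} [MeasureSpace Ω] {m : ℕ} (X : ℕ → Ω → Fin m → ℝ) (n : ℕ)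
    (j : Fin m) : elg X n (Pi.single j 1) = (n : ℝ)⁻¹ * ∫ ω, log (compoundReturn X n ω j) := by
  simp [elg, Pi.single_apply]

theorem dominant_asset_log_optimal_general
    {Ω : Type*} [MeasureSpace Ω] [IsProbabilityMeasure (ℙ : Measure Ω)]
    {m : ℕ}
    (X : ℕ → Ω → Fin m → ℝ)
    (hiid : iIndepFun X ℙ)
    (hident : ∀ k, IdentDistrib (X k) (X 0) ℙ ℙ)
    (Xmin Xmax : Fin m → ℝ)
    (hXmin : ∀ i, -1 < Xmin i)
    (hbdd : ∀ k, ∀ᵐ ω ∂(ℙ : Measure Ω), ∀ i, Xmin i ≤ X k ω i ∧ X k ω i ≤ Xmax i)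
    (j : Fin m)
    (hdom : ∀ i, i ≠ j → ∫ ω, (1 + X 0 ω i) / (1 + X 0 ω j) ≤ 1) :
    (∀ n : ℕ, 1 ≤ n → ∀ K ∈ simplex m, elg X n K ≤ elg X n (Pi.single j 1)) ∧
    (∀ n : ℕ, 1 ≤ n → elg X n (Pi.single j 1) = ∫ ω, Real.log (1 + X 0 ω j)) ∧
    (∀ n : ℕ, 1 ≤ n →
      sSup (elg X n '' simplex m) = ∫ ω, Real.log (1 + X 0 ω j)) := by
  obtain ⟨δ, hδ, Δ, hY⟩ := exists_ae_one_add_mem_Icc hXmin hbdd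
  have hX k : AEMeasurable (X k) := (hident k).aemeasurable_fst
  have hlog n : ∫ ω, log (compoundReturn X n ω j) = n * ∫ ω, log (1 + X 0 ω j) :=
    integral_log_prod_range (fun k ↦ hY.mono fun ω h ↦ (hδ.trans_le (h k j).1).ne')
      (integrable_log_of_ae_mem_Icc (by fun_prop) hδ (hY.mono fun ω h ↦ h 0 j))
      (fun k ↦ (hident k).comp (u := fun v : Fin m → ℝ ↦ 1 + v j) (by fun_prop)) n
  have hratio n i (hij : i ≠ j) :
      ∫ ω, compoundReturn X n ω i / compoundReturn X n ω j ≤ 1 := by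
    rw [integral_compoundReturn_div hiid hident]
    refine pow_le_one₀ (integral_nonneg_of_ae <| hY.mono fun ω h ↦ ?_) (hdom i hij)
    exact div_nonneg (hδ.le.trans (h 0 i).1) (hδ.le.trans (h 0 j).1)
  have hsingle n (hn : 1 ≤ n) : elg X n (Pi.single j 1) = ∫ ω, log (1 + X 0 ω j) := by
    rw [elg_single, hlog, inv_mul_cancel_left₀ (by positivity)]
  have hle n K (hK : K ∈ simplex m) : elg X n K ≤ elg X n (Pi.single j 1) := by
    rw [elg, elg_single]
    refine mul_le_mul_of_nonneg_left ?_ (by positivity)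
    exact integral_log_sum_mul_le (aemeasurable_compoundReturn hX n) (pow_pos hδ n)
      (hY.mono fun ω h ↦ compoundReturn_mem_Icc hδ.le h n) (hratio n) hK
  refine ⟨fun n _ ↦ hle n, hsingle, fun n hn ↦ ?_⟩
  refine IsGreatest.csSup_eq ⟨⟨_, single_mem_simplex j, hsingle n hn⟩, ?_⟩
  rintro _ ⟨K, hK, rfl⟩
  exact (hle n K hK).trans_eq (hsingle n hn)

/-- **Dominant Asset Theorem (sufficiency).** If asset `j` is dominant, then for every
rebalancing period `n ≥ 1` the all-in weight `e_j` is log-optimal over the simplex,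
`g_n(e_j) = E[log (1 + X_j(0))]`, and hence `g_n^* = g_1^* = E[log (1 + X_j(0))]`. -/
theorem dominant_asset_log_optimal
    {Ω : Type*} [MeasureSpace Ω] [IsProbabilityMeasure (ℙ : Measure Ω)]
    {m : ℕ} (hm : 2 ≤ m)
    (X : ℕ → Ω → Fin m → ℝ)
    (hmeas : ∀ k, Measurable (X k))
    (hiid : iIndepFun X ℙ)
    (hident : ∀ k, IdentDistrib (X k) (X 0) ℙ ℙ)
    (Xmin Xmax : Fin m → ℝ)
    (hXmin : ∀ i, -1 < Xmin i)
    (hbdd : ∀ k, ∀ᵐ ω ∂(ℙ : Measure Ω), ∀ i, Xmin i ≤ X k ω i ∧ X k ω i ≤ Xmax i)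
    (j : Fin m)
    (hdom : ∀ i, i ≠ j → ∫ ω, (1 + X 0 ω i) / (1 + X 0 ω j) ≤ 1) :
    (∀ n : ℕ, 1 ≤ n → ∀ K ∈ simplex m, elg X n K ≤ elg X n (Pi.single j 1)) ∧
    (∀ n : ℕ, 1 ≤ n → elg X n (Pi.single j 1) = ∫ ω, Real.log (1 + X 0 ω j)) ∧
    (∀ n : ℕ, 1 ≤ n →
      sSup (elg X n '' simplex m) = ∫ ω, Real.log (1 + X 0 ω j)) :=
  dominant_asset_log_optimal_general X hiid hident Xmin Xmax hXmin hbdd j hdom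
end

section
/- If the all-in weight e_j (the j-th standard basis vector of ℝ^m) is log-optimal for the single-period problem, i.e. g_1(K) ≤ g_1(e_j) for every K ∈ 𝒦, then asset j is dominant: E[(1 + X_i(0))/(1 + X_j(0))] ≤ 1 for every i ≠ j. -/
/-!
Perturb the all-in portfolio `e_j` towards `e_i`: with `f = R_i / R_j`,
`log ((1 - λ) R_j + λ R_i) = log R_j + log (1 + λ (f - 1))`, and `log (1 + u) ≥ u - 2 u²` for
`u ≥ -1/2`. Returns are bounded, so `|f - 1| ≤ B` for a constant `B`, and optimality of `e_j`
gives `λ (E f - 1) - 2 λ² B² ≤ 0` for all small `λ > 0`, which forces `E f ≤ 1`.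
-/

open MeasureTheory ProbabilityTheory Filter Finset Real

open Topology

lemma sub_two_mul_sq_le_log_one_add {u : ℝ} (hu : -(1 / 2) ≤ u) :
    u - 2 * u ^ 2 ≤ log (1 + u) := by
  have hpos : 0 < 1 + u := by linarith
  calc u - 2 * u ^ 2 ≤ 1 - (1 + u)⁻¹ := by
        rw [← sub_nonneg]
        have : 1 - (1 + u)⁻¹ - (u - 2 * u ^ 2) = u ^ 2 * (1 + 2 * u) / (1 + u) := by
          field_simp; ring
        rw [this]
        have : 0 ≤ 1 + 2 * u := by linarith
        positivity
    _ ≤ log (1 + u) := one_sub_inv_le_log_of_pos hpos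

lemma nonpos_of_eventually_le_mul {ε K : ℝ} (h : ∀ᶠ t in 𝓝[>] (0 : ℝ), ε ≤ K * t) : ε ≤ 0 := by
  have hlim : Tendsto (fun t : ℝ => K * t) (𝓝[>] 0) (𝓝 0) := by
    exact ((continuous_const_mul K).tendsto' 0 0 (mul_zero K)).mono_left nhdsWithin_le_nhds
  exact ge_of_tendsto hlim h

section Integrals

variable {Ω : Type*} [MeasurableSpace Ω] {μ : Measure Ω}

lemma integrable_log_of_ae_mem_Icc_s1 [IsFiniteMeasure μ] {g : Ω → ℝ} {c C : ℝ}
    (hg : AEMeasurable g μ) (hc : 0 < c) (hgC : ∀ᵐ ω ∂μ, g ω ∈ Set.Icc c C) :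
    Integrable (fun ω => log (g ω)) μ := by
  refine Integrable.of_bound (measurable_log.comp_aemeasurable hg).aestronglyMeasurable
    (max |log c| |log C|) ?_
  filter_upwards [hgC] with ω ⟨hcg, hgC⟩
  exact abs_le_max_abs_abs (log_le_log hc hcg) (log_le_log (hc.trans_le hcg) hgC)

variable [IsProbabilityMeasure μ] {f : Ω → ℝ} {B : ℝ}

lemma integrable_of_ae_abs_sub_one_le (hf : AEMeasurable f μ)
    (hB : ∀ᵐ ω ∂μ, |f ω - 1| ≤ B) : Integrable f μ := by
  refine Integrable.of_bound hf.aestronglyMeasurable (B + 1) ?_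
  filter_upwards [hB] with ω hω
  calc ‖f ω‖ = |(f ω - 1) + 1| := by rw [Real.norm_eq_abs, sub_add_cancel]
    _ ≤ |f ω - 1| + |1| := abs_add_le _ _
    _ ≤ B + 1 := by rw [abs_one]; linarith

lemma le_integral_log_one_add_mul (hf : AEMeasurable f μ) (hB : ∀ᵐ ω ∂μ, |f ω - 1| ≤ B)
    {t : ℝ} (ht : 0 ≤ t) (htB : t * B ≤ 1 / 2) :
    t * (∫ ω, f ω ∂μ - 1) - 2 * (t * B) ^ 2 ≤ ∫ ω, log (1 + t * (f ω - 1)) ∂μ := by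
  have hu : ∀ᵐ ω ∂μ, |t * (f ω - 1)| ≤ t * B := by
    filter_upwards [hB] with ω hω
    rw [abs_mul, abs_of_nonneg ht]
    exact mul_le_mul_of_nonneg_left hω ht
  have hf_int := integrable_of_ae_abs_sub_one_le hf hB
  have hlog_int : Integrable (fun ω => log (1 + t * (f ω - 1))) μ := by
    refine integrable_log_of_ae_mem_Icc_s1 (c := 1 / 2) (C := 3 / 2) (by fun_prop) (by norm_num) ?_
    filter_upwards [hu] with ω hω
    constructor <;> linarith [abs_le.mp (hω.trans htB)]
  calc t * (∫ ω, f ω ∂μ - 1) - 2 * (t * B) ^ 2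
      = ∫ ω, (t * (f ω - 1) - 2 * (t * B) ^ 2) ∂μ := by
        rw [integral_sub (by fun_prop) (integrable_const _), integral_const_mul,
          integral_sub hf_int (integrable_const _)]
        simp
    _ ≤ ∫ ω, log (1 + t * (f ω - 1)) ∂μ := by
        refine integral_mono_ae (by fun_prop) hlog_int ?_
        filter_upwards [hu] with ω hω
        have hsq : (t * (f ω - 1)) ^ 2 ≤ (t * B) ^ 2 := sq_le_sq' (abs_le.mp hω).1 (abs_le.mp hω).2
        have := sub_two_mul_sq_le_log_one_add (u := t * (f ω - 1))
          (by linarith [abs_le.mp (hω.trans htB)])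
        linarith

lemma integral_le_one_of_eventually_integral_log_one_add_nonpos (hf : AEMeasurable f μ)
    (hB : ∀ᵐ ω ∂μ, |f ω - 1| ≤ B)
    (h : ∀ᶠ t in 𝓝[>] (0 : ℝ), ∫ ω, log (1 + t * (f ω - 1)) ∂μ ≤ 0) :
    ∫ ω, f ω ∂μ ≤ 1 := by
  have hsmall : ∀ᶠ t in 𝓝[>] (0 : ℝ), t * B < 1 / 2 := by
    refine Tendsto.eventually_lt_const (v := 0) (by norm_num) ?_
    exact ((continuous_mul_const B).tendsto' 0 0 (zero_mul B)).mono_left nhdsWithin_le_nhds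
  suffices ∫ ω, f ω ∂μ - 1 ≤ 0 by linarith
  refine nonpos_of_eventually_le_mul (K := 2 * B ^ 2) ?_
  filter_upwards [h, hsmall, self_mem_nhdsWithin] with t hlog htB (ht : 0 < t)
  have := le_integral_log_one_add_mul hf hB ht.le htB.le
  nlinarith

lemma integral_div_le_one_of_eventually_integral_log_le {a b : Ω → ℝ} {c C : ℝ}
    (ha : AEMeasurable a μ) (hb : AEMeasurable b μ) (hc : 0 < c)
    (haC : ∀ᵐ ω ∂μ, a ω ∈ Set.Icc c C) (hbC : ∀ᵐ ω ∂μ, b ω ∈ Set.Icc c C)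
    (h : ∀ᶠ t in 𝓝[>] (0 : ℝ),
      ∫ ω, log ((1 - t) * a ω + t * b ω) ∂μ ≤ ∫ ω, log (a ω) ∂μ) :
    ∫ ω, b ω / a ω ∂μ ≤ 1 := by
  have hab : ∀ᵐ ω ∂μ, a ω ∈ Set.Icc c C ∧ b ω ∈ Set.Icc c C := haC.and hbC
  refine integral_le_one_of_eventually_integral_log_one_add_nonpos (B := C / c + 1)
    (hb.div ha) ?_ ?_
  · filter_upwards [hab] with ω ⟨⟨hca, _⟩, ⟨hcb, hbC⟩⟩
    have ha0 : 0 < a ω := hc.trans_le hca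
    have hdiv : b ω / a ω ≤ C / c := div_le_div₀ (hc.le.trans (hcb.trans hbC)) hbC hc hca
    rw [abs_le]
    constructor <;> linarith [div_nonneg (hc.trans_le hcb).le ha0.le]
  filter_upwards [h, Ioo_mem_nhdsGT one_pos] with t ht ⟨ht0, ht1⟩
  have hmix : ∀ᵐ ω ∂μ, (1 - t) * a ω + t * b ω ∈ Set.Icc c C := by
    filter_upwards [hab] with ω ⟨⟨hca, haC⟩, ⟨hcb, hbC⟩⟩
    constructor <;> nlinarith
  have hsplit : ∀ᵐ ω ∂μ,
      log (1 + t * (b ω / a ω - 1)) = log ((1 - t) * a ω + t * b ω) - log (a ω) := by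
    filter_upwards [haC, hmix] with ω ⟨hca, _⟩ ⟨hcm, _⟩
    have ha0 : 0 < a ω := hc.trans_le hca
    rw [← log_div (hc.trans_le hcm).ne' ha0.ne']
    congr 1
    field_simp
    ring
  rw [integral_congr_ae hsplit,
    integral_sub (integrable_log_of_ae_mem_Icc_s1 (by fun_prop) hc hmix)
      (integrable_log_of_ae_mem_Icc_s1 ha hc haC)]
  linarith

end Integrals

lemma elg_one {Ω : Type*} [MeasureSpace Ω] {m : ℕ} (X : ℕ → Ω → Fin m → ℝ) (K : Fin m → ℝ) :
    elg X 1 K = ∫ ω, log (∑ i, K i * (1 + X 0 ω i)) := by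
  simp [elg, compoundReturn]

lemma segment_single_mem_simplex {m : ℕ} (i j : Fin m) {s : ℝ} (hs0 : 0 ≤ s) (hs1 : s ≤ 1) :
    (1 - s) • Pi.single j 1 + s • Pi.single i 1 ∈ simplex m :=
  convex_stdSimplex ℝ (Fin m) (single_mem_stdSimplex ℝ j) (single_mem_stdSimplex ℝ i)
    (sub_nonneg.mpr hs1) hs0 (sub_add_cancel 1 s)

lemma sum_segment_single_mul {m : ℕ} (i j : Fin m) (s : ℝ) (r : Fin m → ℝ) :
    ∑ t, ((1 - s) • Pi.single j 1 + s • Pi.single i 1 : Fin m → ℝ) t * r t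
      = (1 - s) * r j + s * r i := by
  simp [add_mul, Finset.sum_add_distrib, Pi.single_apply]

theorem log_optimal_imp_dominant_general
    {Ω : Type*} [MeasureSpace Ω] [IsProbabilityMeasure (ℙ : Measure Ω)]
    {m : ℕ}
    (X : ℕ → Ω → Fin m → ℝ)
    (hmeas : ∀ k, Measurable (X k))
    (Xmin Xmax : Fin m → ℝ)
    (hXmin : ∀ i, -1 < Xmin i)
    (hbdd : ∀ k, ∀ᵐ ω ∂(ℙ : Measure Ω), ∀ i, Xmin i ≤ X k ω i ∧ X k ω i ≤ Xmax i)
    (j : Fin m)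
    (hopt : ∀ K ∈ simplex m, elg X 1 K ≤ elg X 1 (Pi.single j 1)) :
    ∀ i, i ≠ j → ∫ ω, (1 + X 0 ω i) / (1 + X 0 ω j) ≤ 1 := by
  intro i _
  have hX : ∀ t, AEMeasurable (fun ω => 1 + X 0 ω t) := fun t =>
    (measurable_const.add ((measurable_pi_apply t).comp (hmeas 0))).aemeasurable
  have hbounds : ∀ t, ∀ᵐ ω ∂(ℙ : Measure Ω), 1 + X 0 ω t ∈ Set.Icc (1 + Xmin t) (1 + Xmax t) :=
    fun t => (hbdd 0).mono fun ω hω => ⟨by linarith [hω t], by linarith [hω t]⟩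
  set c := min (1 + Xmin i) (1 + Xmin j)
  set C := max (1 + Xmax i) (1 + Xmax j)
  have hi : ∀ᵐ ω ∂(ℙ : Measure Ω), 1 + X 0 ω i ∈ Set.Icc c C := (hbounds i).mono fun _ h =>
    Set.Icc_subset_Icc (min_le_left _ _) (le_max_left _ _) h
  have hj : ∀ᵐ ω ∂(ℙ : Measure Ω), 1 + X 0 ω j ∈ Set.Icc c C := (hbounds j).mono fun _ h =>
    Set.Icc_subset_Icc (min_le_right _ _) (le_max_right _ _) h
  refine integral_div_le_one_of_eventually_integral_log_le (hX j) (hX i)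
    (lt_min (by linarith [hXmin i]) (by linarith [hXmin j])) hj hi ?_
  filter_upwards [Ioo_mem_nhdsGT one_pos] with s ⟨hs0, hs1⟩
  have hopt_s := hopt _ (segment_single_mem_simplex i j hs0.le hs1.le)
  simp only [elg_one, sum_segment_single_mul] at hopt_s
  simpa [Pi.single_apply] using hopt_s

/-- **Dominant Asset Theorem (necessity).** If the all-in weight `e_j` is log-optimal for the
single-period problem, then asset `j` is dominant. -/
theorem log_optimal_imp_dominant
    {Ω : Type*} [MeasureSpace Ω] [IsProbabilityMeasure (ℙ : Measure Ω)]
    {m : ℕ} (hm : 2 ≤ m)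
    (X : ℕ → Ω → Fin m → ℝ)
    (hmeas : ∀ k, Measurable (X k))
    (hiid : iIndepFun X ℙ)
    (hident : ∀ k, IdentDistrib (X k) (X 0) ℙ ℙ)
    (Xmin Xmax : Fin m → ℝ)
    (hXmin : ∀ i, -1 < Xmin i)
    (hbdd : ∀ k, ∀ᵐ ω ∂(ℙ : Measure Ω), ∀ i, Xmin i ≤ X k ω i ∧ X k ω i ≤ Xmax i)
    (j : Fin m)
    (hopt : ∀ K ∈ simplex m, elg X 1 K ≤ elg X 1 (Pi.single j 1)) :
    ∀ i, i ≠ j → ∫ ω, (1 + X 0 ω i) / (1 + X 0 ω j) ≤ 1 :=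
  log_optimal_imp_dominant_general X hmeas Xmin Xmax hXmin hbdd j hopt
end

section
/- Suppose asset j is dominant and let K ∈ 𝒦 with K_j > 0. Then buy and hold with weight K is asymptotically log-optimal: lim_{n → ∞} g_n(K) = g_1*, where g_1* = E[log(1 + X_j(0))]. -/
open MeasureTheory ProbabilityTheory Filter Topology Finset Real

/-!
Measure wealth in units of the dominant asset `j`: `Kᵀ R_n = R_{n,j} · Z_n` with
`Z_n = ∑ᵢ Kᵢ ∏_{k<n} (1 + Xᵢ(k)) / (1 + X_j(k))`. The first factor contributes exactly `n g_1*` to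
`E[log (Kᵀ R_n)]`. For the second, `Z_n ≥ K_j` bounds `E[log Z_n]` below by `log K_j`, while
independence and dominance give `E[Z_n] ≤ 1`, hence `E[log Z_n] ≤ E[Z_n] - 1 ≤ 0`. So
`g_n(K) - g_1*` is squeezed between `(log K_j) / n` and `0`.
-/

section Integration

variable {Ω : Type*} [MeasurableSpace Ω] {μ : Measure Ω}

lemma ProbabilityTheory.iIndepFun.integral_prod_range_eq_pow {f : ℕ → Ω → ℝ} (hf : iIndepFun f μ)
    (hmeas : ∀ k, AEStronglyMeasurable (f k) μ) (hident : ∀ k, IdentDistrib (f k) (f 0) μ μ)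
    (n : ℕ) : ∫ ω, ∏ k ∈ range n, f k ω ∂μ = (∫ ω, f 0 ω ∂μ) ^ n := by
  have h := (hf.precomp (Fin.val_injective (n := n))).integral_prod_eq_prod_integral
    fun k => hmeas k
  simp only [Fin.prod_univ_eq_prod_range f,
    Fin.prod_univ_eq_prod_range fun k => ∫ ω, f k ω ∂μ] at h
  rw [← integral_congr_ae (.of_forall fun ω => prod_apply ω (range n) f), h,
    prod_congr rfl fun k _ => (hident k).integral_eq, prod_const, card_range]

lemma integrable_log_of_le [IsFiniteMeasure μ] {Z : Ω → ℝ} {c : ℝ} (hc : 0 < c)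
    (hZ : Integrable Z μ) (hcZ : ∀ᵐ ω ∂μ, c ≤ Z ω) : Integrable (fun ω => log (Z ω)) μ := by
  refine ((integrable_const |log c|).add hZ).mono' hZ.aemeasurable.log.aestronglyMeasurable ?_
  filter_upwards [hcZ] with ω hω
  rw [norm_eq_abs, abs_le, Pi.add_apply]
  constructor
  · linarith [neg_abs_le (log c), log_le_log hc hω, hc.trans_le hω]
  · linarith [log_le_sub_one_of_pos (hc.trans_le hω), abs_nonneg (log c)]

lemma integral_log_nonpos_of_integral_le_one [IsProbabilityMeasure μ] {Z : Ω → ℝ} {c : ℝ}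
    (hc : 0 < c) (hZ : Integrable Z μ) (hcZ : ∀ᵐ ω ∂μ, c ≤ Z ω) (hZ1 : ∫ ω, Z ω ∂μ ≤ 1) :
    ∫ ω, log (Z ω) ∂μ ≤ 0 :=
  calc ∫ ω, log (Z ω) ∂μ ≤ ∫ ω, (Z ω - 1) ∂μ :=
        integral_mono_ae (integrable_log_of_le hc hZ hcZ) (hZ.sub (integrable_const 1))
          (hcZ.mono fun ω hω => log_le_sub_one_of_pos (hc.trans_le hω))
    _ = ∫ ω, Z ω ∂μ - 1 := by simp [integral_sub hZ (integrable_const 1)]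
    _ ≤ 0 := by linarith

lemma tendsto_inv_mul_atTop_nhds_zero_of_mem_Icc {a : ℕ → ℝ} {c d : ℝ}
    (h : ∀ n, a n ∈ Set.Icc c d) : Tendsto (fun n : ℕ => (n : ℝ)⁻¹ * a n) atTop (𝓝 0) :=
  tendsto_inv_atTop_nhds_zero_nat.zero_mul_isBoundedUnder_le <|
    isBoundedUnder_of ⟨max |c| |d|, fun n => abs_le_max_abs_abs (h n).1 (h n).2⟩

end Integration

section Portfolio

variable {Ω : Type*} {m : ℕ}

noncomputable def relativeReturn (X : ℕ → Ω → Fin m → ℝ) (i j : Fin m) (k : ℕ) (ω : Ω) : ℝ :=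
  (1 + X k ω i) / (1 + X k ω j)

noncomputable def relativeWealth (X : ℕ → Ω → Fin m → ℝ) (j : Fin m) (K : Fin m → ℝ) (n : ℕ)
    (ω : Ω) : ℝ :=
  ∑ i, K i * ∏ k ∈ range n, relativeReturn X i j k ω

variable {X : ℕ → Ω → Fin m → ℝ} {Xmin Xmax : Fin m → ℝ} {K : Fin m → ℝ} {n k : ℕ} {ω : Ω}

lemma relativeReturn_self {j : Fin m} (h : 0 < 1 + X k ω j) : relativeReturn X j j k ω = 1 :=
  div_self h.ne'

lemma relativeReturn_mem_Icc (hXmin : ∀ i, -1 < Xmin i)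
    (hω : ∀ i, Xmin i ≤ X k ω i ∧ X k ω i ≤ Xmax i) (i j : Fin m) :
    relativeReturn X i j k ω ∈ Set.Icc 0 ((1 + Xmax i) / (1 + Xmin j)) := by
  have hi := hω i
  have hj := hω j
  have := hXmin i
  have := hXmin j
  exact ⟨div_nonneg (by linarith) (by linarith),
    div_le_div₀ (by linarith) (by linarith) (by linarith) (by linarith)⟩

lemma compoundReturn_div_compoundReturn (i j : Fin m) :
    compoundReturn X n ω i / compoundReturn X n ω j = ∏ k ∈ range n, relativeReturn X i j k ω :=
  (prod_div_distrib _ _).symm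

lemma measurable_relativeReturn [MeasurableSpace Ω] {i j : Fin m} (hmeas : Measurable (X k)) :
    Measurable (relativeReturn X i j k) := by
  unfold relativeReturn
  fun_prop

lemma sum_mul_compoundReturn_eq_mul_relativeWealth {j : Fin m} (hj : ∀ k, 0 < 1 + X k ω j) :
    ∑ i, K i * compoundReturn X n ω i = compoundReturn X n ω j * relativeWealth X j K n ω := by
  have hRj : compoundReturn X n ω j ≠ 0 := (prod_pos fun k _ => hj k).ne'
  rw [relativeWealth, mul_sum]
  refine sum_congr rfl fun i _ => ?_
  rw [← compoundReturn_div_compoundReturn]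
  field_simp

lemma le_relativeWealth {j : Fin m} (hK : ∀ i, 0 ≤ K i) (hpos : ∀ k i, 0 < 1 + X k ω i) :
    K j ≤ relativeWealth X j K n ω := by
  have hjj : ∏ k ∈ range n, relativeReturn X j j k ω = 1 :=
    prod_eq_one fun k _ => relativeReturn_self (hpos k j)
  calc K j = K j * ∏ k ∈ range n, relativeReturn X j j k ω := by rw [hjj, mul_one]
    _ ≤ relativeWealth X j K n ω :=
      single_le_sum (f := fun i => K i * ∏ k ∈ range n, relativeReturn X i j k ω)
        (fun i _ => mul_nonneg (hK i) (prod_nonneg fun k _ => (div_pos (hpos k i) (hpos k j)).le))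
        (mem_univ j)

lemma log_sum_mul_compoundReturn {j : Fin m} (hK : ∀ i, 0 ≤ K i) (hKj : 0 < K j)
    (hpos : ∀ k i, 0 < 1 + X k ω i) :
    log (∑ i, K i * compoundReturn X n ω i)
      = ∑ k ∈ range n, log (1 + X k ω j) + log (relativeWealth X j K n ω) := by
  rw [sum_mul_compoundReturn_eq_mul_relativeWealth fun k => hpos k j, compoundReturn,
    log_mul (prod_pos fun k _ => hpos k j).ne' (hKj.trans_le (le_relativeWealth hK hpos)).ne',
    log_prod fun k _ => (hpos k j).ne']

end Portfolio

section BoundedReturns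

variable {Ω : Type*} [MeasureSpace Ω] {m : ℕ} {X : ℕ → Ω → Fin m → ℝ} {Xmin Xmax : Fin m → ℝ}
  {K : Fin m → ℝ} {i j : Fin m}

lemma integral_prod_relativeReturn_le_one (hmeas : ∀ k, Measurable (X k))
    (hiid : iIndepFun X ℙ) (hident : ∀ k, IdentDistrib (X k) (X 0) ℙ ℙ)
    (hXmin : ∀ i, -1 < Xmin i) (hbdd : ∀ᵐ ω ∂ℙ, ∀ k i, Xmin i ≤ X k ω i ∧ X k ω i ≤ Xmax i)
    (hdom : ∫ ω, relativeReturn X i j 0 ω ≤ 1) (n : ℕ) :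
    ∫ ω, ∏ k ∈ range n, relativeReturn X i j k ω ≤ 1 := by
  have hg : Measurable fun v : Fin m → ℝ => (1 + v i) / (1 + v j) := by fun_prop
  have hind : iIndepFun (relativeReturn X i j) ℙ := hiid.comp _ fun _ => hg
  rw [hind.integral_prod_range_eq_pow
    (fun k => (measurable_relativeReturn (hmeas k)).aestronglyMeasurable)
    (fun k => (hident k).comp hg)]
  exact pow_le_one₀ (integral_nonneg_of_ae (hbdd.mono fun ω hω =>
    (relativeReturn_mem_Icc hXmin (hω 0) i j).1)) hdom

lemma ae_one_add_pos (hXmin : ∀ i, -1 < Xmin i)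
    (hbdd : ∀ᵐ ω ∂ℙ, ∀ k i, Xmin i ≤ X k ω i ∧ X k ω i ≤ Xmax i) :
    ∀ᵐ ω ∂ℙ, ∀ k i, 0 < 1 + X k ω i :=
  hbdd.mono fun ω hω k i => by linarith [hXmin i, (hω k i).1]

variable [IsProbabilityMeasure (ℙ : Measure Ω)]

lemma integrable_prod_relativeReturn (hmeas : ∀ k, Measurable (X k))
    (hXmin : ∀ i, -1 < Xmin i) (hbdd : ∀ᵐ ω ∂ℙ, ∀ k i, Xmin i ≤ X k ω i ∧ X k ω i ≤ Xmax i)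
    (n : ℕ) : Integrable (fun ω => ∏ k ∈ range n, relativeReturn X i j k ω) := by
  refine .of_mem_Icc 0 (((1 + Xmax i) / (1 + Xmin j)) ^ n)
    (Finset.measurable_prod _ fun k _ => measurable_relativeReturn (hmeas k)).aemeasurable ?_
  filter_upwards [hbdd] with ω hω
  have hr := fun k => relativeReturn_mem_Icc (hXmin := hXmin) (hω k) i j
  exact ⟨prod_nonneg fun k _ => (hr k).1,
    (prod_le_prod (fun k _ => (hr k).1) fun k _ => (hr k).2).trans_eq
      (by rw [prod_const, card_range])⟩

lemma integrable_relativeWealth (hmeas : ∀ k, Measurable (X k))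
    (hXmin : ∀ i, -1 < Xmin i) (hbdd : ∀ᵐ ω ∂ℙ, ∀ k i, Xmin i ≤ X k ω i ∧ X k ω i ≤ Xmax i)
    (n : ℕ) : Integrable (relativeWealth X j K n) :=
  integrable_finsetSum _ fun i _ =>
    (integrable_prod_relativeReturn hmeas hXmin hbdd n).const_mul (K i)

lemma integral_relativeReturn_self (hXmin : ∀ i, -1 < Xmin i)
    (hbdd : ∀ᵐ ω ∂ℙ, ∀ k i, Xmin i ≤ X k ω i ∧ X k ω i ≤ Xmax i) :
    ∫ ω, relativeReturn X j j 0 ω = 1 := by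
  rw [integral_congr_ae ((ae_one_add_pos hXmin hbdd).mono fun ω hω =>
    relativeReturn_self (hω 0 j)), integral_const]
  simp

lemma integral_relativeWealth_le_one (hmeas : ∀ k, Measurable (X k))
    (hiid : iIndepFun X ℙ) (hident : ∀ k, IdentDistrib (X k) (X 0) ℙ ℙ)
    (hXmin : ∀ i, -1 < Xmin i) (hbdd : ∀ᵐ ω ∂ℙ, ∀ k i, Xmin i ≤ X k ω i ∧ X k ω i ≤ Xmax i)
    (hdom : ∀ i, ∫ ω, relativeReturn X i j 0 ω ≤ 1) (hK : K ∈ simplex m) (n : ℕ) :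
    ∫ ω, relativeWealth X j K n ω ≤ 1 :=
  calc ∫ ω, relativeWealth X j K n ω
      = ∑ i, K i * ∫ ω, ∏ k ∈ range n, relativeReturn X i j k ω := by
        unfold relativeWealth
        rw [integral_finsetSum _ fun i _ =>
          (integrable_prod_relativeReturn hmeas hXmin hbdd n).const_mul (K i)]
        simp only [integral_const_mul]
    _ ≤ ∑ i, K i * 1 := sum_le_sum fun i _ => mul_le_mul_of_nonneg_left
        (integral_prod_relativeReturn_le_one hmeas hiid hident hXmin hbdd (hdom i) n) (hK.1 i)
    _ = 1 := by simp [hK.2]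

lemma integral_log_relativeWealth_mem_Icc (hmeas : ∀ k, Measurable (X k))
    (hiid : iIndepFun X ℙ) (hident : ∀ k, IdentDistrib (X k) (X 0) ℙ ℙ)
    (hXmin : ∀ i, -1 < Xmin i) (hbdd : ∀ᵐ ω ∂ℙ, ∀ k i, Xmin i ≤ X k ω i ∧ X k ω i ≤ Xmax i)
    (hdom : ∀ i, ∫ ω, relativeReturn X i j 0 ω ≤ 1) (hK : K ∈ simplex m) (hKj : 0 < K j)
    (n : ℕ) : ∫ ω, log (relativeWealth X j K n ω) ∈ Set.Icc (log (K j)) 0 := by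
  have hZ := integrable_relativeWealth (j := j) (K := K) hmeas hXmin hbdd n
  have hKZ : ∀ᵐ ω ∂ℙ, K j ≤ relativeWealth X j K n ω :=
    (ae_one_add_pos hXmin hbdd).mono fun ω hω => le_relativeWealth hK.1 hω
  refine ⟨?_, integral_log_nonpos_of_integral_le_one hKj hZ hKZ
    (integral_relativeWealth_le_one hmeas hiid hident hXmin hbdd hdom hK n)⟩
  simpa using integral_mono_ae (integrable_const _) (integrable_log_of_le hKj hZ hKZ)
    (hKZ.mono fun ω hω => log_le_log hKj hω)

lemma integral_log_sum_mul_compoundReturn (hmeas : ∀ k, Measurable (X k))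
    (hident : ∀ k, IdentDistrib (X k) (X 0) ℙ ℙ) (hXmin : ∀ i, -1 < Xmin i)
    (hbdd : ∀ᵐ ω ∂ℙ, ∀ k i, Xmin i ≤ X k ω i ∧ X k ω i ≤ Xmax i) (hK : K ∈ simplex m)
    (hKj : 0 < K j) (n : ℕ) :
    ∫ ω, log (∑ i, K i * compoundReturn X n ω i)
      = n * (∫ ω, log (1 + X 0 ω j)) + ∫ ω, log (relativeWealth X j K n ω) := by
  have hg : Measurable fun v : Fin m → ℝ => log (1 + v j) := by fun_prop
  have hlog : ∀ k, Integrable (fun ω => log (1 + X k ω j)) := fun k =>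
    .of_mem_Icc (log (1 + Xmin j)) (log (1 + Xmax j)) (hg.comp (hmeas k)).aemeasurable
      (hbdd.mono fun ω hω =>
        ⟨log_le_log (by linarith [hXmin j]) (by linarith [(hω k j).1]),
          log_le_log (by linarith [hXmin j, (hω k j).1]) (by linarith [(hω k j).2])⟩)
  have hident_log : ∀ k, ∫ ω, log (1 + X k ω j) = ∫ ω, log (1 + X 0 ω j) := fun k =>
    ((hident k).comp hg).integral_eq
  have hpos := ae_one_add_pos hXmin hbdd
  have hlogZ := integrable_log_of_le hKj (integrable_relativeWealth hmeas hXmin hbdd n)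
    (hpos.mono fun ω hω => le_relativeWealth hK.1 hω)
  rw [integral_congr_ae (hpos.mono fun ω hω => log_sum_mul_compoundReturn hK.1 hKj hω),
    integral_add (integrable_finsetSum _ fun k _ => hlog k) hlogZ,
    integral_finsetSum _ fun k _ => hlog k,
    sum_congr rfl fun k _ => hident_log k, sum_const, card_range, nsmul_eq_mul]

end BoundedReturns

theorem buy_and_hold_asymptotically_log_optimal_general
    {Ω : Type*} [MeasureSpace Ω] [IsProbabilityMeasure (ℙ : Measure Ω)]
    {m : ℕ}
    (X : ℕ → Ω → Fin m → ℝ)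
    (hmeas : ∀ k, Measurable (X k))
    (hiid : iIndepFun X ℙ)
    (hident : ∀ k, IdentDistrib (X k) (X 0) ℙ ℙ)
    (Xmin Xmax : Fin m → ℝ)
    (hXmin : ∀ i, -1 < Xmin i)
    (hbdd : ∀ k, ∀ᵐ ω ∂(ℙ : Measure Ω), ∀ i, Xmin i ≤ X k ω i ∧ X k ω i ≤ Xmax i)
    (j : Fin m)
    (hdom : ∀ i, i ≠ j → ∫ ω, (1 + X 0 ω i) / (1 + X 0 ω j) ≤ 1)
    (K : Fin m → ℝ) (hK : K ∈ simplex m) (hKj : 0 < K j) :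
    Tendsto (fun n : ℕ => elg X n K) atTop (𝓝 (∫ ω, Real.log (1 + X 0 ω j))) := by
  have hbdd' := ae_all_iff.2 hbdd
  have hdom' : ∀ i, ∫ ω, relativeReturn X i j 0 ω ≤ 1 := fun i => by
    rcases eq_or_ne i j with rfl | hij
    · exact (integral_relativeReturn_self hXmin hbdd').le
    · exact hdom i hij
  have helg : ∀ n : ℕ, n ≠ 0 → elg X n K
      = (∫ ω, log (1 + X 0 ω j)) + (n : ℝ)⁻¹ * ∫ ω, log (relativeWealth X j K n ω) := by
    intro n hn
    rw [elg, integral_log_sum_mul_compoundReturn hmeas hident hXmin hbdd' hK hKj]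
    field_simp
  have hlim := (tendsto_const_nhds (x := ∫ ω, log (1 + X 0 ω j))).add
    (tendsto_inv_mul_atTop_nhds_zero_of_mem_Icc
      (integral_log_relativeWealth_mem_Icc hmeas hiid hident hXmin hbdd' hdom' hK hKj))
  rw [add_zero] at hlim
  exact hlim.congr' ((eventually_ne_atTop 0).mono fun n hn => (helg n hn).symm)

/-- **Asymptotic log-optimality of buy and hold.** If asset `j` is dominant and `K_j > 0`,
then `g_n(K) → g_1^* = E[log (1 + X_j(0))]` as `n → ∞`. -/
theorem buy_and_hold_asymptotically_log_optimal
    {Ω : Type*} [MeasureSpace Ω] [IsProbabilityMeasure (ℙ : Measure Ω)]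
    {m : ℕ} (hm : 2 ≤ m)
    (X : ℕ → Ω → Fin m → ℝ)
    (hmeas : ∀ k, Measurable (X k))
    (hiid : iIndepFun X ℙ)
    (hident : ∀ k, IdentDistrib (X k) (X 0) ℙ ℙ)
    (Xmin Xmax : Fin m → ℝ)
    (hXmin : ∀ i, -1 < Xmin i)
    (hbdd : ∀ k, ∀ᵐ ω ∂(ℙ : Measure Ω), ∀ i, Xmin i ≤ X k ω i ∧ X k ω i ≤ Xmax i)
    (j : Fin m)
    (hdom : ∀ i, i ≠ j → ∫ ω, (1 + X 0 ω i) / (1 + X 0 ω j) ≤ 1)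
    (K : Fin m → ℝ) (hK : K ∈ simplex m) (hKj : 0 < K j) :
    Tendsto (fun n : ℕ => elg X n K) atTop (𝓝 (∫ ω, Real.log (1 + X 0 ω j))) :=
  buy_and_hold_asymptotically_log_optimal_general X hmeas hiid hident Xmin Xmax hXmin hbdd j hdom K
    hK hKj
end
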